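/- Pasting is hypothesis decreasing: if τ is a non-empty list of labels and the quadruple (τ, σ, σ', τ') is decreasing, then for every list υ of labels, |σ'| + |υ| ≺_mul |σ| + |τ ++ υ|. -/

import Mathlib

open Relation

universe u v

variable {α : Type u} {β : Type v}

/-- down-set of a set of labels -/
def ds (r : β → β → Prop) (S : Set β) : Set β := {b | ∃ a ∈ S, r b a}

/-- down-set of a multiset of labels -/
def dm (r : β → β → Prop) (M : Multiset β) : Set β := ds r {a | a ∈ M}

/-- down-set of a list of labels -/
def dl (r : β → β → Prop) (σ : List β) : Set β := ds r {a | a ∈ σ}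

/-- `M -s S`: remove from the multiset `M` all occurrences of elements of the set `S` -/
noncomputable def msub (M : Multiset β) (S : Set β) : Multiset β :=
  @Multiset.filter β (fun a => a ∉ S) (Classical.decPred _) M

/-- `M ≼_mul N` -/
def mulLe (r : β → β → Prop) (M N : Multiset β) : Prop :=
  ∃ I J K : Multiset β, M = I + K ∧ N = I + J ∧ ∀ k ∈ K, k ∈ dm r J

/-- `M ≺_mul N`: the multiset extension of `r` -/
def mulLt (r : β → β → Prop) (M N : Multiset β) : Prop :=
  ∃ I J K : Multiset β, M = I + K ∧ N = I + J ∧ (∀ k ∈ K, k ∈ dm r J) ∧ J ≠ 0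

/-- the one-step multiset extension of `r` -/
def mult1 (r : β → β → Prop) (M N : Multiset β) : Prop :=
  ∃ (a : β) (I K : Multiset β), M = I + K ∧ N = I + {a} ∧ ∀ b ∈ K, r b a

/-- the lexicographic maximum measure `|σ|` -/
noncomputable def lexmax (r : β → β → Prop) : List β → Multiset β
  | [] => 0
  | a :: σ => {a} + msub (lexmax r σ) (ds r {a})

/-- the quadruple of label lists `(τ, σ, σ', τ')` is decreasing -/
def Decreasing (r : β → β → Prop) (τ σ σ' τ' : List β) : Prop :=
  mulLe r (lexmax r (σ ++ τ')) (lexmax r τ + lexmax r σ) ∧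
  mulLe r (lexmax r (τ ++ σ')) (lexmax r τ + lexmax r σ)

/-- labeled rewrite sequences of the labeled ARS `B` -/
inductive LSeq (B : α → β → α → Prop) : α → List β → α → Prop
  | nil (a : α) : LSeq B a [] a
  | cons {a b c : α} {l : β} {σ : List β} :
      B a l b → LSeq B b σ c → LSeq B a (l :: σ) c

/-- labeled conversions of the labeled ARS `B` -/
inductive Conv (B : α → β → α → Prop) : α → List β → α → Prop
  | nil (a : α) : Conv B a [] a
  | fwd {a b c : α} {l : β} {σ : List β} :
      B a l b → Conv B b σ c → Conv B a (l :: σ) c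
  | bwd {a b c : α} {l : β} {σ : List β} :
      B b l a → Conv B b σ c → Conv B a (l :: σ) c

/-- the local peak `b ←lb a →lc c` is decreasing with respect to conversions -/
def LDConv (B : α → β → α → Prop) (r : β → β → Prop) (b c : α) (lb lc : β) : Prop :=
  ∃ (d b1 b2 c1 c2 : α) (σ1 σ3 τ1 τ3 : List β),
    Conv B b σ1 b1 ∧ (∀ l ∈ σ1, l ∈ ds r ({lc} : Set β)) ∧
    (b1 = b2 ∨ B b1 lb b2) ∧
    Conv B b2 σ3 d ∧ (∀ l ∈ σ3, l ∈ ds r ({lc, lb} : Set β)) ∧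
    Conv B c τ1 c1 ∧ (∀ l ∈ τ1, l ∈ ds r ({lb} : Set β)) ∧
    (c1 = c2 ∨ B c1 lc c2) ∧
    Conv B c2 τ3 d ∧ (∀ l ∈ τ3, l ∈ ds r ({lc, lb} : Set β))

/-- confluence of an abstract rewrite system -/
def Confluent (A : α → α → Prop) : Prop :=
  ∀ a b c : α, ReflTransGen A a b → ReflTransGen A a c →
    ∃ d, ReflTransGen A b d ∧ ReflTransGen A c d

/-! Since `|τ ++ υ| = |τ| + (|υ| -s ds τ)`, the second half of decreasingness reads
`|τ| + (|σ'| -s ds τ) ≼_mul |τ| + |σ|`. The labels of `|σ'|` and `|υ|` lying in `ds τ` are below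
elements of `|τ|`, which is nonempty since `τ` is; trading the nonempty `|τ|` for labels below it
turns `≼_mul` into `≺_mul`, and then `|υ| -s ds τ` is added to both sides. -/

lemma mem_msub {M : Multiset β} {S : Set β} {a : β} : a ∈ msub M S ↔ a ∈ M ∧ a ∉ S := by
  simp [msub]

lemma msub_empty (M : Multiset β) : msub M ∅ = M := by
  simp [msub]

lemma msub_add (M N : Multiset β) (S : Set β) : msub (M + N) S = msub M S + msub N S := by
  simp [msub]

lemma msub_msub (M : Multiset β) (S T : Set β) : msub (msub M S) T = msub M (S ∪ T) := by
  classical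
  ext x
  by_cases hS : x ∈ S <;> by_cases hT : x ∈ T <;> simp [msub, hS, hT]

lemma exists_eq_msub_add (M : Multiset β) (S : Set β) :
    ∃ R, M = msub M S + R ∧ ∀ a ∈ R, a ∈ S := by
  classical
  refine ⟨M.filter (· ∈ S), ?_, fun a ha => (Multiset.mem_filter.mp ha).2⟩
  rw [msub, add_comm]
  convert (Multiset.filter_add_not _ M).symm

lemma dl_nil (r : β → β → Prop) : dl r [] = ∅ := by
  simp [dl, ds]

lemma dl_cons (r : β → β → Prop) (a : β) (τ : List β) :
    dl r (a :: τ) = ds r {a} ∪ dl r τ := by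
  ext x
  simp [dl, ds, or_and_right, exists_or]

lemma lexmax_append (r : β → β → Prop) (τ υ : List β) :
    lexmax r (τ ++ υ) = lexmax r τ + msub (lexmax r υ) (dl r τ) := by
  induction τ with
  | nil => simp [lexmax, dl_nil, msub_empty]
  | cons a τ ih =>
    rw [List.cons_append, lexmax, ih, msub_add, lexmax, msub_msub, dl_cons, Set.union_comm,
      add_assoc]

lemma lexmax_ne_zero (r : β → β → Prop) {τ : List β} (hτ : τ ≠ []) : lexmax r τ ≠ 0 := by
  obtain ⟨a, τ, rfl⟩ := List.exists_cons_of_ne_nil hτ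
  simp [lexmax]

lemma dl_subset_dm_lexmax (r : β → β → Prop) [IsTrans β r] (τ : List β) :
    dl r τ ⊆ dm r (lexmax r τ) := by
  induction τ with
  | nil => simp [dl_nil]
  | cons a τ ih =>
    have ha : a ∈ lexmax r (a :: τ) := by simp [lexmax]
    rw [dl_cons]
    rintro x (⟨b, hb, hxb⟩ | hx)
    · exact ⟨a, ha, hb ▸ hxb⟩
    obtain ⟨c, hc : c ∈ lexmax r τ, hxc⟩ := ih hx
    by_cases hca : r c a
    · exact ⟨a, ha, _root_.trans hxc hca⟩
    · refine ⟨c, ?_, hxc⟩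
      simp [lexmax, mem_msub, ds, hca, hc]

lemma Multiset.exists_refinement_of_add_eq_add {A B C D : Multiset β} (h : A + B = C + D) :
    ∃ A₁ A₂ B₁ B₂ : Multiset β, A = A₁ + A₂ ∧ B = B₁ + B₂ ∧ C = A₁ + B₁ ∧ D = A₂ + B₂ := by
  classical
  refine ⟨A ∩ C, A - C, C - A, B - (C - A), ?_, ?_, ?_, ?_⟩ <;>
  · ext x
    have hx := congrArg (Multiset.count x) h
    simp only [Multiset.count_add] at hx
    simp only [Multiset.count_add, Multiset.count_sub, Multiset.count_inter]
    omega

lemma mulLt_add_right {r : β → β → Prop} {M N : Multiset β} (h : mulLt r M N) (P : Multiset β) :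
    mulLt r (M + P) (N + P) := by
  obtain ⟨I, J, K, rfl, rfl, hK, hJ⟩ := h
  exact ⟨I + P, J, K, by abel, by abel, hK, hJ⟩

lemma mulLt_of_mulLe_add {r : β → β → Prop} [IsTrans β r] {T X R N : Multiset β}
    (h : mulLe r (T + X) N) (hT : T ≠ 0) (hR : ∀ k ∈ R, k ∈ dm r T) :
    mulLt r (X + R) N := by
  obtain ⟨I, J, K, hTX, rfl, hK⟩ := h
  obtain ⟨T₁, T₂, X₁, X₂, rfl, rfl, rfl, rfl⟩ := Multiset.exists_refinement_of_add_eq_add hTX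
  have hT₂ : ∀ t ∈ T₂, t ∈ dm r J := fun t ht => hK t (Multiset.mem_add.mpr (.inl ht))
  -- the part `T₁` of `T` that `h` leaves untouched is now removed along with `J`
  refine ⟨X₁, T₁ + J, X₂ + R, by abel, by abel, ?_, ?_⟩
  · intro k hk
    rcases Multiset.mem_add.mp hk with hk | hk
    · obtain ⟨j, hj, hkj⟩ := hK k (Multiset.mem_add.mpr (.inr hk))
      exact ⟨j, Multiset.mem_add.mpr (.inr hj), hkj⟩
    obtain ⟨t, ht, hkt⟩ := hR k hk
    rcases Multiset.mem_add.mp ht with ht | ht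
    · exact ⟨t, Multiset.mem_add.mpr (.inl ht), hkt⟩
    · obtain ⟨j, hj, htj⟩ := hT₂ t ht
      exact ⟨j, Multiset.mem_add.mpr (.inr hj), _root_.trans hkt htj⟩
  · intro hJ
    obtain ⟨rfl, rfl⟩ := add_eq_zero.mp hJ
    have : T₂ = 0 := Multiset.eq_zero_of_forall_notMem fun t ht => by
      obtain ⟨j, hj, -⟩ := hT₂ t ht
      exact Multiset.notMem_zero j hj
    exact hT (by simp [this])

theorem pasting_hypothesis_decreasing_general {β : Type v} (r : β → β → Prop)
    (htrans : Transitive r)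
    (τ σ σ' τ' : List β) (hτ : τ ≠ []) (h : Decreasing r τ σ σ' τ') :
    ∀ υ : List β,
      mulLt r (lexmax r σ' + lexmax r υ) (lexmax r σ + lexmax r (τ ++ υ)) := by
  intro υ
  have : IsTrans β r := ⟨htrans⟩
  obtain ⟨Rσ', hσ', hRσ'⟩ := exists_eq_msub_add (lexmax r σ') (dl r τ)
  obtain ⟨Rυ, hυ, hRυ⟩ := exists_eq_msub_add (lexmax r υ) (dl r τ)
  have hR : ∀ k ∈ Rσ' + Rυ, k ∈ dm r (lexmax r τ) := fun k hk =>
    dl_subset_dm_lexmax r τ <| (Multiset.mem_add.mp hk).elim (hRσ' k) (hRυ k)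
  have hτσ' := h.2
  rw [lexmax_append] at hτσ'
  have key := mulLt_add_right (mulLt_of_mulLe_add hτσ' (lexmax_ne_zero r hτ) hR)
    (msub (lexmax r υ) (dl r τ))
  convert key using 1
  · conv_lhs => rw [hσ', hυ]
    abel
  · rw [lexmax_append]
    abel

/-- pasting is hypothesis decreasing -/
theorem pasting_hypothesis_decreasing {β : Type v} (r : β → β → Prop)
    (htrans : Transitive r) (hirrefl : Irreflexive r)
    (τ σ σ' τ' : List β) (hτ : τ ≠ []) (h : Decreasing r τ σ σ' τ') :
    ∀ υ : List β,
      mulLt r (lexmax r σ' + lexmax r υ) (lexmax r σ + lexmax r (τ ++ υ)) :=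
  pasting_hypothesis_decreasing_general r htrans τ σ σ' τ' hτ h
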